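/- arXiv:2605.29080 — 2 statements merged into one kernel-verified Lean document; each statement's English description precedes it below -/
import Mathlib

section
/- Let G be γ-non-extremal on n vertices with δ(G) ≥ (1/2 − ν)n (ν ≪ γ), let u ∈ V(G), H ⊆ V(G) with |H| = 3D³/γ, and W ⊆ V(G) ∖ H with |W| ≤ γn/10. Let Γ be a rooted tree with root ρ, maximum degree at most D, nonempty level L₃(Γ) and empty level L₄(Γ) (so Γ has depth exactly 3). Then G contains a copy of Γ in which ρ is mapped to u, all vertices of L₃(Γ) are mapped into H, and the images of L₁(Γ) ∪ L₂(Γ) ∪ L₃(Γ) avoid W. -/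
open Finset
open scoped Classical

/-- Number of neighbors of `v` inside the finite set `S`. -/
noncomputable def degIn {V : Type*} (G : SimpleGraph V) (v : V) (S : Finset V) : ℕ :=
  (S.filter fun u => G.Adj v u).card

/-- Number of ordered adjacent pairs between `A` and `B`. -/
noncomputable def eCount {V : Type*} (G : SimpleGraph V) (A B : Finset V) : ℕ :=
  ((A ×ˢ B).filter fun p => G.Adj p.1 p.2).card

/-- `G` is `γ`-non-extremal. -/
def NonExtremal {V : Type*} [Fintype V] (G : SimpleGraph V) (γ : ℝ) : Prop :=
  ∀ A B : Finset V, A.card = Fintype.card V / 2 → B.card = Fintype.card V / 2 →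
    γ * (Fintype.card V : ℝ) ^ 2 < (eCount G A B : ℝ)

/-!
Let `S` be the set of vertices with at least `2D³` neighbours in `H`. Double counting the edges
at `H` against the minimum degree gives `|S| ≥ (1/2 - ν - 2γ/3) n`, since `γ |H| = 3D³`. Padding
`N(u)` and `S` to sets of size `⌊n/2⌋`, non-extremality yields `e(N(u), S) ≥ γn²/4`, so the set
`T` of neighbours of `u` with at least `γn/8` neighbours in `S` has at least `γn/8` elements.
After deleting `W` (of size `≤ γn/10`), along the chain `{u}, T, S, H` every vertex of one set
has at least `2D³ ≥ |Γ|` neighbours in the next, and `Γ` is embedded greedily, level by level,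
each vertex next to the image of its parent.
-/

section Counting

variable {V : Type*} (G : SimpleGraph V)

lemma eCount_eq_sum_degIn (A B : Finset V) : eCount G A B = ∑ a ∈ A, degIn G a B := by
  rw [eCount, card_filter, sum_product]
  simp only [degIn, card_filter]

lemma eCount_comm (A B : Finset V) : eCount G A B = eCount G B A := by
  rw [eCount, eCount, card_filter, card_filter, sum_product, sum_product_right]
  simp only [G.adj_comm]

lemma degIn_le_card (v : V) (S : Finset V) : degIn G v S ≤ #S :=
  card_filter_le _ _

lemma degIn_le_degIn_sdiff_add_card (v : V) (S W : Finset V) :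
    degIn G v S ≤ degIn G v (S \ W) + #W := by
  refine (card_le_card fun w hw => ?_).trans (card_union_le _ W)
  simp only [mem_union, mem_filter, mem_sdiff] at hw ⊢
  tauto

lemma eCount_le_eCount_add_card_sdiff (A B A' B' : Finset V) :
    eCount G A B ≤ eCount G A' B' + #(A \ A') * #B + #A * #(B \ B') := by
  calc eCount G A B
      ≤ #((((A' ×ˢ B').filter fun p => G.Adj p.1 p.2) ∪ (A \ A') ×ˢ B) ∪ A ×ˢ (B \ B')) := by
        refine card_le_card fun p hp => ?_
        simp only [mem_filter, mem_product, mem_union, mem_sdiff] at hp ⊢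
        tauto
    _ ≤ _ := by
        refine (card_union_le _ _).trans (add_le_add ((card_union_le _ _).trans ?_) ?_) <;>
          simp [eCount, card_product]

lemma eCount_le_card_filter_mul_add {t : ℝ} (ht : 0 ≤ t) (X Y : Finset V) :
    (eCount G X Y : ℝ) ≤ #{v ∈ X | t ≤ degIn G v Y} * #Y + #X * t := by
  rw [eCount_eq_sum_degIn, Nat.cast_sum,
    ← sum_filter_add_sum_filter_not X (fun v => t ≤ degIn G v Y)]
  gcongr
  · calc ∑ v ∈ X with t ≤ degIn G v Y, (degIn G v Y : ℝ)
        ≤ ∑ v ∈ X with t ≤ degIn G v Y, (#Y : ℝ) := by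
          gcongr with v; exact_mod_cast degIn_le_card G v Y
      _ = _ := by simp
  · calc ∑ v ∈ X with ¬ t ≤ degIn G v Y, (degIn G v Y : ℝ)
        ≤ ∑ v ∈ X with ¬ t ≤ degIn G v Y, t :=
          sum_le_sum fun v hv => (not_le.mp (mem_filter.mp hv).2).le
      _ ≤ ∑ v ∈ X, t := sum_le_sum_of_subset_of_nonneg (filter_subset _ _) fun _ _ _ => ht
      _ = _ := by simp

end Counting

section Dense

variable {V : Type*} [Fintype V] {G : SimpleGraph V}

lemma mul_card_le_card_filter_mul_add {δ t : ℝ} (hδ : ∀ v, δ ≤ degIn G v univ) (ht : 0 ≤ t)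
    (H : Finset V) :
    δ * #H ≤ #{v | t ≤ degIn G v H} * #H + Fintype.card V * t := by
  calc δ * #H = ∑ _h ∈ H, δ := by simp [mul_comm]
    _ ≤ ∑ h ∈ H, (degIn G h univ : ℝ) := sum_le_sum fun h _ => hδ h
    _ = eCount G univ H := by rw [eCount_comm, eCount_eq_sum_degIn, Nat.cast_sum]
    _ ≤ _ := by simpa using eCount_le_card_filter_mul_add G ht univ H

lemma exists_card_eq_card_sdiff_le (X : Finset V) {m : ℕ} (hm : m ≤ Fintype.card V) {a : ℝ}
    (ha : 0 ≤ a) (hX : m - #X ≤ a) : ∃ A : Finset V, #A = m ∧ #(A \ X) ≤ a := by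
  rcases le_total m #X with hmX | hXm
  · obtain ⟨A, hAX, hA⟩ := exists_subset_card_eq hmX
    exact ⟨A, hA, by simpa [sdiff_eq_empty_iff_subset.mpr hAX] using ha⟩
  · obtain ⟨A, hXA, -, hA⟩ := exists_subsuperset_card_eq (subset_univ X) hXm (by simpa using hm)
    refine ⟨A, hA, ?_⟩
    rwa [card_sdiff_of_subset hXA, hA, Nat.cast_sub hXm]

lemma NonExtremal.sub_mul_lt_eCount {γ a b : ℝ} (hG : NonExtremal G γ) {X Y : Finset V}
    (ha : 0 ≤ a) (hb : 0 ≤ b) (hX : Fintype.card V / 2 - a ≤ #X)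
    (hY : Fintype.card V / 2 - b ≤ #Y) :
    γ * Fintype.card V ^ 2 - (a + b) * Fintype.card V < eCount G X Y := by
  set n := Fintype.card V
  have half_le : ((n / 2 : ℕ) : ℝ) ≤ n / 2 := Nat.cast_div_le
  obtain ⟨A, hA, hAX⟩ := exists_card_eq_card_sdiff_le X (Nat.div_le_self n 2) ha (by linarith)
  obtain ⟨B, hB, hBY⟩ := exists_card_eq_card_sdiff_le Y (Nat.div_le_self n 2) hb (by linarith)
  have hAn : (#A : ℝ) ≤ n := by exact_mod_cast card_le_univ A
  have hBn : (#B : ℝ) ≤ n := by exact_mod_cast card_le_univ B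
  have hsplit : (eCount G A B : ℝ) ≤ eCount G X Y + #(A \ X) * #B + #A * #(B \ Y) := by
    exact_mod_cast eCount_le_eCount_add_card_sdiff G A B X Y
  have h1 : (#(A \ X) : ℝ) * #B ≤ a * n := mul_le_mul hAX hBn (by positivity) ha
  have h2 : (#A : ℝ) * #(B \ Y) ≤ n * b := mul_le_mul hAn hBY (by positivity) (by positivity)
  linarith [hG A B hA hB]

end Dense

namespace SimpleGraph

variable {Vt : Type*} {Γ : SimpleGraph Vt} {ρ : Vt}

/-- Junk value `x` when no neighbour of `x` is closer to `ρ`, e.g. for `x = ρ`. -/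
noncomputable def parent (Γ : SimpleGraph Vt) (ρ x : Vt) : Vt :=
  if h : ∃ p, Γ.Adj p x ∧ Γ.dist ρ p + 1 = Γ.dist ρ x then h.choose else x

lemma Walk.dist_add_dist_le_length {x y : Vt} (w : Γ.Walk ρ y) (hx : x ∈ w.support) :
    Γ.dist ρ x + Γ.dist x y ≤ w.length := by
  have h₁ := dist_le (w.takeUntil x hx)
  have h₂ := dist_le (w.dropUntil x hx)
  have := w.length_takeUntil_le_length hx
  rw [Walk.length_takeUntil] at h₁ this
  rw [Walk.length_dropUntil] at h₂
  omega

lemma Connected.exists_adj_dist_add_one (hc : Γ.Connected) {x : Vt} (hx : x ≠ ρ) :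
    ∃ p, Γ.Adj p x ∧ Γ.dist ρ p + 1 = Γ.dist ρ x := by
  obtain ⟨w, hw⟩ := hc.exists_walk_length_eq_dist x ρ
  cases w with
  | nil => exact absurd rfl hx
  | @cons _ p _ h w =>
    refine ⟨p, h.symm, ?_⟩
    have h₁ : Γ.dist ρ p ≤ w.length := dist_comm (u := ρ) ▸ dist_le w
    have h₂ := hc.dist_triangle (u := ρ) (v := p) (w := x)
    rw [dist_eq_one_iff_adj.mpr h.symm] at h₂
    rw [dist_comm, Walk.length_cons] at hw
    omega

lemma Connected.adj_parent (hc : Γ.Connected) {x : Vt} (hx : x ≠ ρ) : Γ.Adj (Γ.parent ρ x) x := by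
  have h := hc.exists_adj_dist_add_one hx
  rw [parent, dif_pos h]
  exact h.choose_spec.1

lemma Connected.dist_parent_add_one (hc : Γ.Connected) {x : Vt} (hx : x ≠ ρ) :
    Γ.dist ρ (Γ.parent ρ x) + 1 = Γ.dist ρ x := by
  have h := hc.exists_adj_dist_add_one hx
  rw [parent, dif_pos h]
  exact h.choose_spec.2

lemma IsTree.dist_eq_add_one_of_adj (hT : Γ.IsTree) {p x y : Vt} (hpx : Γ.Adj p x)
    (hp : Γ.dist ρ p + 1 = Γ.dist ρ x) (hyx : Γ.Adj y x) (hyp : y ≠ p) :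
    Γ.dist ρ y = Γ.dist ρ x + 1 := by
  obtain ⟨r, -, hr⟩ := hT.connected.exists_path_of_dist ρ p
  have hw : (r.concat hpx).IsPath :=
    (r.concat hpx).isPath_of_length_eq_dist (by rw [Walk.length_concat, hr, hp])
  obtain ⟨q, hq, hqy⟩ := hT.connected.exists_path_of_dist ρ y
  -- If `x` is not on a shortest path to `y`, acyclicity puts `y` on the path `ρ ⋯ p x`,
  -- where it can only be the penultimate vertex `p`.
  by_cases hxq : x ∈ q.support
  · have h₁ := q.dist_add_dist_le_length hxq
    have h₂ := hT.connected.dist_triangle (u := ρ) (v := x) (w := y)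
    rw [dist_eq_one_iff_adj.mpr hyx.symm] at h₁ h₂
    omega
  · have hyw := hT.isAcyclic.mem_support_of_ne_mem_support_of_adj_of_isPath hw hq hyx.symm hxq
    have := hT.isAcyclic.eq_penultimate_of_adj_end hw hyx.symm hyw
    rw [Walk.penultimate_concat] at this
    exact absurd this hyp

lemma IsTree.eq_parent_of_adj (hT : Γ.IsTree) {x y : Vt} (hy : y ≠ ρ) (hxy : Γ.Adj x y)
    (h : Γ.dist ρ x ≤ Γ.dist ρ y) : x = Γ.parent ρ y := by
  by_contra hx
  have := hT.dist_eq_add_one_of_adj (hT.connected.adj_parent hy)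
    (hT.connected.dist_parent_add_one hy) hxy hx
  omega

lemma IsTree.map_adj_of_adj_parent {V : Type*} {G : SimpleGraph V} (hT : Γ.IsTree) {f : Vt → V}
    (hf : ∀ x ≠ ρ, G.Adj (f (Γ.parent ρ x)) (f x)) {x y : Vt} (hxy : Γ.Adj x y) :
    G.Adj (f x) (f y) := by
  wlog h : Γ.dist ρ x ≤ Γ.dist ρ y generalizing x y
  · exact (this hxy.symm (le_of_not_ge h)).symm
  have hy : y ≠ ρ := by
    rintro rfl
    exact hxy.ne (hT.connected.dist_eq_zero_iff.mp (Nat.le_zero.mp (h.trans_eq dist_self))).symm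
  simpa only [← hT.eq_parent_of_adj hy hxy h] using hf y hy

variable [Fintype Vt]

lemma Connected.card_dist_eq_le_pow (hc : Γ.Connected) {D : ℕ} (hdeg : ∀ x, degIn Γ x univ ≤ D)
    (i : ℕ) : #{x | Γ.dist ρ x = i} ≤ D ^ i := by
  induction i with
  | zero =>
    refine (card_le_one.mpr fun x hx y hy => ?_).trans (pow_zero D).ge
    simp only [mem_filter, mem_univ, true_and, hc.dist_eq_zero_iff] at hx hy
    exact hx.symm.trans hy
  | succ i ih =>
    refine (card_le_mul_card_image_of_maps_to (f := Γ.parent ρ) (t := {x | Γ.dist ρ x = i})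
      ?_ D fun p _ => (card_le_card fun x hx => ?_).trans (hdeg p)).trans ?_
    · intro x hx
      simp only [mem_filter, mem_univ, true_and] at hx ⊢
      have hxρ : x ≠ ρ := by rintro rfl; simp at hx
      have := hc.dist_parent_add_one hxρ
      omega
    · simp only [mem_filter, mem_univ, true_and] at hx ⊢
      have hxρ : x ≠ ρ := by rintro rfl; simp at hx
      exact hx.2 ▸ hc.adj_parent hxρ
    · rw [pow_succ']
      exact Nat.mul_le_mul_left D ih

lemma Connected.card_le_sum_pow (hc : Γ.Connected) {D d : ℕ} (hdeg : ∀ x, degIn Γ x univ ≤ D)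
    (hd : ∀ x, Γ.dist ρ x ≤ d) : Fintype.card Vt ≤ ∑ i ∈ range (d + 1), D ^ i := by
  calc Fintype.card Vt = #((range (d + 1)).biUnion fun i => {x | Γ.dist ρ x = i}) := by
        rw [← card_univ]
        congr 1
        ext x
        simp [hd x]
    _ ≤ _ := card_biUnion_le.trans (sum_le_sum fun i _ => hc.card_dist_eq_le_pow hdeg i)

lemma Connected.card_le_two_mul_pow_three (hc : Γ.Connected) {D : ℕ} (hD : 2 ≤ D)
    (hdeg : ∀ x, degIn Γ x univ ≤ D) (hd : ∀ x, Γ.dist ρ x ≤ 3) : Fintype.card Vt ≤ 2 * D ^ 3 := by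
  refine (hc.card_le_sum_pow hdeg hd).trans ?_
  simp only [sum_range_succ, range_zero, sum_empty]
  nlinarith

end SimpleGraph

section Greedy

variable {α V : Type*} [Fintype α] (G : SimpleGraph V) {par : α → α} {r : α → ℕ} {ρ : α}

theorem exists_injective_adj_parent (hr : ∀ x ≠ ρ, r (par x) + 1 = r x) {d : ℕ}
    (hd : ∀ x, r x ≤ d) {A : ℕ → Finset V} {u : V} (hu : u ∈ A (r ρ))
    (hA : ∀ i < d, ∀ v ∈ A i, Fintype.card α ≤ degIn G v (A (i + 1))) :
    ∃ f : α → V, Function.Injective f ∧ f ρ = u ∧ (∀ x, f x ∈ A (r x)) ∧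
      ∀ x ≠ ρ, G.Adj (f (par x)) (f x) := by
  suffices key : ∀ P : Finset α, (∀ x ∈ P, x ≠ ρ → par x ∈ P) → ∃ f : α → V,
      Set.InjOn f P ∧ f ρ = u ∧ ∀ x ∈ P, f x ∈ A (r x) ∧ (x ≠ ρ → G.Adj (f (par x)) (f x)) by
    obtain ⟨f, hinj, hρ, hf⟩ := key univ fun _ _ _ => mem_univ _
    exact ⟨f, Set.injOn_univ.mp (by simpa using hinj), hρ,
      fun x => (hf x (mem_univ x)).1, fun x => (hf x (mem_univ x)).2⟩
  -- Induct over parent-closed sets `P`, removing a non-root vertex `x` of maximal rank; `x` is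
  -- then placed at a neighbour of the image of its parent outside the (fewer than `card α`)
  -- images already used.
  intro P
  induction P using Finset.strongInduction with
  | H P ih =>
  intro hP
  rcases (P.erase ρ).eq_empty_or_nonempty with hPρ | hPρ
  · have hPsub : P ⊆ {ρ} := fun x hx => mem_singleton.mpr <| by
      by_contra hxρ
      exact (eq_empty_iff_forall_notMem.mp hPρ) x (mem_erase.mpr ⟨hxρ, hx⟩)
    refine ⟨fun _ => u, fun a ha b hb _ => ?_, rfl, fun x hx => ?_⟩
    · exact (mem_singleton.mp (hPsub ha)).trans (mem_singleton.mp (hPsub hb)).symm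
    · rw [mem_singleton.mp (hPsub hx)]
      exact ⟨hu, fun h => absurd rfl h⟩
  obtain ⟨x, hx, hxmax⟩ := exists_max_image (P.erase ρ) r hPρ
  obtain ⟨hxρ, hxP⟩ := mem_erase.mp hx
  have hrx := hr x hxρ
  have hP' : ∀ y ∈ P.erase x, y ≠ ρ → par y ∈ P.erase x := by
    intro y hy hyρ
    obtain ⟨hyx, hyP⟩ := mem_erase.mp hy
    refine mem_erase.mpr ⟨fun h => ?_, hP y hyP hyρ⟩
    have := hxmax y (mem_erase.mpr ⟨hyρ, hyP⟩)
    have := hr y hyρ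
    rw [h] at this
    omega
  obtain ⟨f, hinj, hρ, hf⟩ := ih _ (erase_ssubset hxP) hP'
  have hpar : par x ∈ P.erase x :=
    mem_erase.mpr ⟨fun h => by rw [h] at hrx; omega, hP x hxP hxρ⟩
  have hfree : #((P.erase x).image f) < degIn G (f (par x)) (A (r x)) := by
    calc #((P.erase x).image f) ≤ #(P.erase x) := card_image_le
      _ < Fintype.card α := (card_lt_univ_of_notMem (notMem_erase x P))
      _ ≤ _ := hrx ▸ hA _ (by have := hd x; omega) _ (hf _ hpar).1
  obtain ⟨v, hv, hvf⟩ := exists_mem_notMem_of_card_lt_card hfree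
  obtain ⟨hvA, hv⟩ := mem_filter.mp hv
  have heq : Set.EqOn (Function.update f x v) f ↑(P.erase x) := fun y hy =>
    Function.update_of_ne (ne_of_mem_erase hy) _ _
  refine ⟨Function.update f x v, ?_, ?_, fun y hy => ?_⟩
  · rw [← insert_erase hxP, coe_insert, Set.injOn_insert (by simp)]
    refine ⟨hinj.congr heq.symm, ?_⟩
    rw [Function.update_self, heq.image_eq]
    simpa [and_comm] using hvf
  · rw [Function.update_of_ne hxρ.symm, hρ]
  · rcases eq_or_ne y x with rfl | hyx
    · rw [Function.update_self, heq hpar]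
      exact ⟨hvA, fun _ => hv⟩
    · have hy' : y ∈ P.erase x := mem_erase.mpr ⟨hyx, hy⟩
      rw [heq hy']
      refine ⟨(hf y hy').1, fun hyρ => ?_⟩
      rw [heq (hP' y hy' hyρ)]
      exact (hf y hy').2 hyρ

end Greedy

theorem SimpleGraph.IsTree.exists_injective_hom_of_levels {Vt V : Type*} [Fintype Vt]
    {Γ : SimpleGraph Vt} {ρ : Vt} (G : SimpleGraph V) (hT : Γ.IsTree) {d : ℕ}
    (hd : ∀ x, Γ.dist ρ x ≤ d) {A : ℕ → Finset V} {u : V} (hu : u ∈ A 0)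
    (hA : ∀ i < d, ∀ v ∈ A i, Fintype.card Vt ≤ degIn G v (A (i + 1))) :
    ∃ f : Vt → V, Function.Injective f ∧ (∀ x y, Γ.Adj x y → G.Adj (f x) (f y)) ∧ f ρ = u ∧
      ∀ x, f x ∈ A (Γ.dist ρ x) := by
  obtain ⟨f, hf, hfρ, hfA, hfadj⟩ := exists_injective_adj_parent G
    (fun x hx => hT.connected.dist_parent_add_one hx) hd (by simpa using hu) hA
  exact ⟨f, hf, fun x y => hT.map_adj_of_adj_parent hfadj, hfρ, hfA⟩

section Connecting

variable {V : Type*} [Fintype V] {G : SimpleGraph V} {γ ν : ℝ} {k : ℕ}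

lemma le_card_filter_le_degIn (hδ : ∀ v, (1 / 2 - ν) * Fintype.card V ≤ degIn G v univ)
    {H : Finset V} (hH : H.Nonempty) (hk : k ≤ 2 * γ / 3 * #H) :
    (1 / 2 - ν - 2 * γ / 3) * Fintype.card V ≤ #{v | k ≤ degIn G v H} := by
  have h := mul_card_le_card_filter_mul_add hδ (Nat.cast_nonneg k) H
  simp only [Nat.cast_le] at h
  have hH : (0 : ℝ) < #H := by exact_mod_cast hH.card_pos
  have hn : (Fintype.card V : ℝ) * k ≤ Fintype.card V * (2 * γ / 3 * #H) := by gcongr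
  nlinarith

lemma exists_connecting_sets (hγ : 0 < γ) (hν : 0 ≤ ν) (hνγ : ν ≤ γ / 24)
    (hG : NonExtremal G γ) (hδ : ∀ v, (1 / 2 - ν) * Fintype.card V ≤ degIn G v univ)
    (hn : 40 * k ≤ γ * Fintype.card V) (u : V) {H W : Finset V} (hH : H.Nonempty)
    (hk : k ≤ 2 * γ / 3 * #H) (hW : #W ≤ γ * Fintype.card V / 10) :
    ∃ A₁ A₂ : Finset V, Disjoint A₁ W ∧ Disjoint A₂ W ∧ k ≤ degIn G u A₁ ∧
      (∀ v ∈ A₁, k ≤ degIn G v A₂) ∧ ∀ v ∈ A₂, k ≤ degIn G v H := by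
  have hS := le_card_filter_le_degIn hδ hH hk
  set n := Fintype.card V
  have hn0 : (0 : ℝ) < n := by exact_mod_cast Fintype.card_pos_iff.mpr ⟨u⟩
  set S : Finset V := {v | k ≤ degIn G v H}
  set N : Finset V := {v | G.Adj u v}
  have hN : (1 / 2 - ν) * n ≤ #N := hδ u
  have hNS : γ * n ^ 2 / 4 ≤ eCount G N S := by
    have := hG.sub_mul_lt_eCount (a := ν * n) (b := (ν + 2 * γ / 3) * n) (X := N) (Y := S)
      (by positivity) (by positivity) (by linarith) (by linarith)
    nlinarith
  set T : Finset V := {v ∈ N | γ * n / 8 ≤ degIn G v S}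
  have hT : γ * n / 8 ≤ #T := by
    have := eCount_le_card_filter_mul_add G (t := γ * n / 8) (by positivity) N S
    have hSn : (#S : ℝ) ≤ n := by exact_mod_cast card_le_univ S
    have hNn : (#N : ℝ) ≤ n := by exact_mod_cast card_le_univ N
    have h₁ : (#T : ℝ) * #S ≤ #T * n := by gcongr
    have h₂ : (#N : ℝ) * (γ * n / 8) ≤ n * (γ * n / 8) := by gcongr
    have : γ * n / 8 * n ≤ #T * n := by nlinarith
    exact le_of_mul_le_mul_right this hn0
  have hkn : (k : ℝ) ≤ γ * n / 8 - γ * n / 10 := by linarith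
  refine ⟨T \ W, S \ W, sdiff_disjoint, sdiff_disjoint, ?_, fun v hv => ?_, fun v hv => ?_⟩
  · have hTN : ∀ v ∈ T \ W, G.Adj u v := fun v hv =>
      (mem_filter.mp (mem_filter.mp (mem_sdiff.mp hv).1).1).2
    have hTW : (#T : ℝ) ≤ #(T \ W) + #W := by exact_mod_cast card_le_card_sdiff_add_card
    rw [degIn, filter_true_of_mem hTN]
    exact_mod_cast (show (k : ℝ) ≤ #(T \ W) by linarith)
  · have hv := (mem_filter.mp (mem_sdiff.mp hv).1).2
    have : (degIn G v S : ℝ) ≤ degIn G v (S \ W) + #W := by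
      exact_mod_cast degIn_le_degIn_sdiff_add_card G v S W
    exact_mod_cast (show (k : ℝ) ≤ degIn G v (S \ W) by linarith)
  · exact (mem_filter.mp (mem_sdiff.mp hv).1).2

end Connecting

theorem stmt12_general (D : ℕ) (hD : 2 ≤ D) (γ ν : ℝ)
    (hγ0 : 0 < γ) (hν0 : 0 < ν) (hνγ : ν ≤ γ / 50) :
    ∃ n₀ : ℕ, ∀ (V : Type) [Fintype V], ∀ (G : SimpleGraph V) (n : ℕ),
      Fintype.card V = n → n₀ ≤ n →
      NonExtremal G γ →
      (∀ v : V, (1 / 2 - ν) * n ≤ (degIn G v univ : ℝ)) →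
      ∀ (u : V) (H W : Finset V),
        (H.card : ℝ) = 3 * D ^ 3 / γ → W ⊆ univ \ H → (W.card : ℝ) ≤ γ * n / 10 →
      ∀ (Vt : Type) [Fintype Vt], ∀ (Γ : SimpleGraph Vt) (ρ : Vt),
        Γ.IsTree → (∀ x : Vt, degIn Γ x univ ≤ D) →
        (∃ x : Vt, Γ.dist ρ x = 3) → (∀ x : Vt, Γ.dist ρ x ≤ 3) →
        ∃ f : Vt → V, Function.Injective f ∧
          (∀ x y : Vt, Γ.Adj x y → G.Adj (f x) (f y)) ∧
          f ρ = u ∧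
          (∀ x : Vt, Γ.dist ρ x = 3 → f x ∈ H) ∧
          (∀ x : Vt, 1 ≤ Γ.dist ρ x → f x ∉ W) := by
  refine ⟨⌈80 * D ^ 3 / γ⌉₊, ?_⟩
  intro V _ G n hV hn hG hδ u H W hH hWH hW Vt _ Γ ρ hT hΓ _ hd
  subst hV
  have hD0 : 0 < D := by omega
  have hH0 : H.Nonempty :=
    card_pos.mp <| by exact_mod_cast hH ▸ (by positivity : (0 : ℝ) < 3 * D ^ 3 / γ)
  have hk : ((2 * D ^ 3 : ℕ) : ℝ) ≤ 2 * γ / 3 * #H :=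
    le_of_eq (by rw [hH]; field_simp; push_cast; ring)
  have hn' : 40 * ((2 * D ^ 3 : ℕ) : ℝ) ≤ γ * Fintype.card V := by
    have := (div_le_iff₀' hγ0).mp (Nat.ceil_le.mp hn)
    push_cast; linarith
  obtain ⟨A₁, A₂, hA₁W, hA₂W, hu, hA₁, hA₂⟩ :=
    exists_connecting_sets hγ0 hν0.le (by linarith) hG hδ hn' u hH0 hk hW
  have hVt := hT.connected.card_le_two_mul_pow_three hD hΓ hd
  let A : ℕ → Finset V := fun | 0 => {u} | 1 => A₁ | 2 => A₂ | _ => H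
  obtain ⟨f, hf, hhom, hfρ, hfA⟩ := hT.exists_injective_hom_of_levels G hd (A := A) (u := u)
    (mem_singleton_self u) fun i hi v hv => by
      interval_cases i
      · rw [mem_singleton.mp hv]; exact hVt.trans hu
      · exact hVt.trans (hA₁ v hv)
      · exact hVt.trans (hA₂ v hv)
  refine ⟨f, hf, hhom, hfρ, fun x hx => by simpa [A, hx] using hfA x, fun x hx => ?_⟩
  have hfx := hfA x
  have := hd x
  interval_cases Γ.dist ρ x
  · exact disjoint_left.mp hA₁W hfx
  · exact disjoint_left.mp hA₂W hfx
  · exact fun hW => (mem_sdiff.mp (hWH hW)).2 hfx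

/-- Connecting lemma: any rooted tree of depth exactly 3 and maximum degree at most `D`
can be embedded with its root at any given vertex `u`, its third level inside `H`,
and its levels 1–3 avoiding `W`. -/
theorem stmt12 (D : ℕ) (hD : 2 ≤ D) (γ ν : ℝ)
    (hγ0 : 0 < γ) (hγ : γ < 1 / 4) (hν0 : 0 < ν) (hνγ : ν ≤ γ / 50) :
    ∃ n₀ : ℕ, ∀ (V : Type) [Fintype V], ∀ (G : SimpleGraph V) (n : ℕ),
      Fintype.card V = n → n₀ ≤ n →
      NonExtremal G γ →
      (∀ v : V, (1 / 2 - ν) * n ≤ (degIn G v univ : ℝ)) →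
      ∀ (u : V) (H W : Finset V),
        (H.card : ℝ) = 3 * D ^ 3 / γ → W ⊆ univ \ H → (W.card : ℝ) ≤ γ * n / 10 →
      ∀ (Vt : Type) [Fintype Vt], ∀ (Γ : SimpleGraph Vt) (ρ : Vt),
        Γ.IsTree → (∀ x : Vt, degIn Γ x univ ≤ D) →
        (∃ x : Vt, Γ.dist ρ x = 3) → (∀ x : Vt, Γ.dist ρ x ≤ 3) →
        ∃ f : Vt → V, Function.Injective f ∧
          (∀ x y : Vt, Γ.Adj x y → G.Adj (f x) (f y)) ∧
          f ρ = u ∧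
          (∀ x : Vt, Γ.dist ρ x = 3 → f x ∈ H) ∧
          (∀ x : Vt, 1 ≤ Γ.dist ρ x → f x ∉ W) :=
  stmt12_general D hD γ ν hγ0 hν0 hνγ
end

section
/- Let u, v be two distinct vertices of a γ-non-extremal graph G on n vertices with δ(G) ≥ (1/2 − ν)n, where ν ≪ γ, and let W ⊆ V(G) with |W| ≤ γn/10. Then G contains a path of length three from u to v whose two internal vertices avoid W ∪ {u, v}. -/
open Finset
open scoped Classical

lemma eCount_split {V : Type} [Fintype V] (G : SimpleGraph V) (A B A' B' : Finset V) :
    eCount G A' B' ≤ eCount G A B + (A' \ A).card * B'.card + A'.card * (B' \ B).card := by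
  classical
  have hsub : ((A' ×ˢ B').filter fun p => G.Adj p.1 p.2) ⊆
      (((A ×ˢ B).filter fun p => G.Adj p.1 p.2) ∪ (A' \ A) ×ˢ B') ∪ A' ×ˢ (B' \ B) := by
    intro p hp
    simp only [mem_filter, mem_product, mem_union, mem_sdiff] at *
    by_cases h1 : p.1 ∈ A
    · by_cases h2 : p.2 ∈ B
      · tauto
      · tauto
    · tauto
  calc eCount G A' B' ≤ ((((A ×ˢ B).filter fun p => G.Adj p.1 p.2) ∪ (A' \ A) ×ˢ B')
        ∪ A' ×ˢ (B' \ B)).card := card_le_card hsub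
    _ ≤ (((A ×ˢ B).filter fun p => G.Adj p.1 p.2) ∪ (A' \ A) ×ˢ B').card
        + (A' ×ˢ (B' \ B)).card := card_union_le _ _
    _ ≤ (((A ×ˢ B).filter fun p => G.Adj p.1 p.2)).card + ((A' \ A) ×ˢ B').card
        + (A' ×ˢ (B' \ B)).card := by gcongr; exact card_union_le _ _
    _ = eCount G A B + (A' \ A).card * B'.card + A'.card * (B' \ B).card := by
        rw [card_product, card_product]; rfl

lemma pad_set {V : Type} [Fintype V] (S : Finset V) (k : ℕ) (hk : k ≤ Fintype.card V) :
    ∃ S' : Finset V, S'.card = k ∧ ((S' \ S).card : ℝ) ≤ max 0 ((k : ℝ) - S.card) := by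
  classical
  obtain ⟨T, hTS, hT⟩ := S.exists_subset_card_eq (min_le_left S.card k)
  obtain ⟨S', hTS', _, hS'⟩ := exists_subsuperset_card_eq (n := k)
    T.subset_univ (hT ▸ min_le_right _ _) (by rwa [card_univ])
  refine ⟨S', hS', ?_⟩
  have h1 : (S' \ S) ⊆ (S' \ T) := sdiff_subset_sdiff Subset.rfl hTS
  have h2 : (S' \ T).card = k - min S.card k := by rw [card_sdiff_of_subset hTS', hS', hT]
  have h3 : (S' \ S).card ≤ k - min S.card k := h2 ▸ card_le_card h1
  have h4 : ((S' \ S).card : ℝ) ≤ (k : ℝ) - (min S.card k : ℕ) := by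
    have := (Nat.cast_le (α := ℝ)).2 h3
    rwa [Nat.cast_sub (min_le_right _ _)] at this
  rcases le_total S.card k with h | h
  · rw [min_eq_left h] at h4
    exact h4.trans (le_max_right _ _)
  · rw [min_eq_right h] at h4
    simpa using h4.trans (le_max_left _ _)

set_option maxHeartbeats 1600000 in
/-- Between any two distinct vertices of a non-extremal graph there is a path of length
three whose internal vertices avoid a small forbidden set `W` and the endpoints. -/
theorem stmt13 (γ ν : ℝ) (hγ0 : 0 < γ) (hγ : γ < 1 / 4) (hν0 : 0 < ν) (hνγ : ν ≤ γ / 50) :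
    ∃ n₀ : ℕ, ∀ (V : Type) [Fintype V], ∀ (G : SimpleGraph V) (n : ℕ),
      Fintype.card V = n → n₀ ≤ n →
      NonExtremal G γ →
      (∀ v : V, (1 / 2 - ν) * n ≤ (degIn G v univ : ℝ)) →
      ∀ (u v : V), u ≠ v → ∀ W : Finset V, (W.card : ℝ) ≤ γ * n / 10 →
      ∃ w₁ w₂ : V, G.Adj u w₁ ∧ G.Adj w₁ w₂ ∧ G.Adj w₂ v ∧
        w₁ ∉ W ∧ w₂ ∉ W ∧ w₁ ≠ u ∧ w₁ ≠ v ∧ w₂ ≠ u ∧ w₂ ≠ v ∧ w₁ ≠ w₂ := by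
  classical
  refine ⟨⌈100 / γ⌉₊ + 1, ?_⟩
  intro V _ G n hcard hn hNE hdeg u v huv W hW
  -- basic numeric facts
  have hn1 : 1 ≤ n := le_trans (Nat.le_add_left 1 _) hn
  have hnR : (100 : ℝ) / γ ≤ n := by
    calc (100 : ℝ) / γ ≤ (⌈100 / γ⌉₊ : ℕ) := Nat.le_ceil _
    _ ≤ n := by exact_mod_cast le_trans (Nat.le_succ _) hn
  have hnpos : (0 : ℝ) < n := by positivity
  have hγn : (100 : ℝ) ≤ γ * n := by
    rw [div_le_iff₀ hγ0] at hnR; linarith [hnR]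
  set k := n / 2 with hkdef
  have hkV : k ≤ Fintype.card V := by rw [hcard]; exact Nat.div_le_self _ _
  have hkR : (k : ℝ) ≤ n / 2 := by
    rw [hkdef]; exact_mod_cast Nat.cast_div_le
  -- the forbidden set
  set F : Finset V := insert u (insert v W) with hF
  have hFcard : (F.card : ℝ) ≤ γ * n / 10 + 2 := by
    calc (F.card : ℝ) ≤ ((insert v W).card : ℕ) + 1 := by
          exact_mod_cast card_insert_le _ _
    _ ≤ (W.card : ℝ) + 1 + 1 := by
          have : ((insert v W).card : ℝ) ≤ (W.card : ℝ) + 1 := by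
            exact_mod_cast card_insert_le _ _
          linarith
    _ ≤ γ * n / 10 + 2 := by linarith
  set A₀ : Finset V := (univ.filter fun w => G.Adj u w) \ F with hA₀
  set B₀ : Finset V := (univ.filter fun w => G.Adj v w) \ F with hB₀
  -- lower bounds on |A₀|, |B₀|
  have hcardlow : ∀ x : V, ((1:ℝ)/2 - ν) * n - (γ * n / 10 + 2) ≤
      (((univ.filter fun w => G.Adj x w) \ F).card : ℝ) := by
    intro x
    have h1 : ((univ.filter fun w => G.Adj x w).card : ℝ) ≤
        (((univ.filter fun w => G.Adj x w) \ F).card : ℝ) + F.card := by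
      exact_mod_cast card_le_card_sdiff_add_card
    have h2 := hdeg x
    simp only [degIn] at h2
    linarith
  have hA₀c := hcardlow u
  have hB₀c := hcardlow v
  rw [← hA₀] at hA₀c
  rw [← hB₀] at hB₀c
  -- pad to size k
  obtain ⟨A', hA'c, hA'd⟩ := pad_set A₀ k hkV
  obtain ⟨B', hB'c, hB'd⟩ := pad_set B₀ k hkV
  -- deficiency bound
  have hD : ∀ S : Finset V, ((1:ℝ)/2 - ν) * n - (γ * n / 10 + 2) ≤ S.card →
      max 0 ((k : ℝ) - S.card) ≤ ν * n + γ * n / 10 + 3 := by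
    intro S hS
    apply max_le
    · positivity
    · linarith [hkR, hS]
  have hdA : ((A' \ A₀).card : ℝ) ≤ ν * n + γ * n / 10 + 3 :=
    hA'd.trans (hD _ hA₀c)
  have hdB : ((B' \ B₀).card : ℝ) ≤ ν * n + γ * n / 10 + 3 :=
    hB'd.trans (hD _ hB₀c)
  -- non-extremality
  have hNE' : γ * (n : ℝ) ^ 2 < eCount G A' B' := by
    have := hNE A' B' (by rw [hA'c, hcard]) (by rw [hB'c, hcard])
    rwa [hcard] at this
  -- splitting
  have hsplit := eCount_split G A₀ B₀ A' B'
  have hsplitR : (eCount G A' B' : ℝ) ≤ (eCount G A₀ B₀ : ℝ)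
      + ((A' \ A₀).card : ℝ) * B'.card + (A'.card : ℝ) * ((B' \ B₀).card : ℝ) := by
    exact_mod_cast hsplit
  have hA'cR : (A'.card : ℝ) ≤ n / 2 := by rw [hA'c]; exact hkR
  have hB'cR : (B'.card : ℝ) ≤ n / 2 := by rw [hB'c]; exact hkR
  have hdA0 : (0:ℝ) ≤ ((A' \ A₀).card : ℝ) := Nat.cast_nonneg _
  have hdB0 : (0:ℝ) ≤ ((B' \ B₀).card : ℝ) := Nat.cast_nonneg _
  have hpos : (0 : ℝ) < eCount G A₀ B₀ := by
    have hb1 : ((A' \ A₀).card : ℝ) * B'.card ≤ (ν * n + γ * n / 10 + 3) * (n / 2) := by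
      apply mul_le_mul hdA hB'cR (Nat.cast_nonneg _) (by positivity)
    have hb2 : (A'.card : ℝ) * ((B' \ B₀).card : ℝ) ≤ (n / 2) * (ν * n + γ * n / 10 + 3) := by
      apply mul_le_mul hA'cR hdB hdB0 (by linarith)
    have hb : ((A' \ A₀).card : ℝ) * B'.card + (A'.card : ℝ) * ((B' \ B₀).card : ℝ)
        ≤ ν * n * n + γ * n * n / 10 + 3 * n := by nlinarith [hb1, hb2]
    have hνn2 : ν * n * n ≤ γ / 50 * (n * n) := by nlinarith [hνγ, hnpos, sq_nonneg (n:ℝ)]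
    have h100n : 100 * (n:ℝ) ≤ γ * n * n := by nlinarith [hγn, hnpos]
    nlinarith [hsplitR, hNE', hb, hνn2, h100n]
  -- extract the edge
  have hposn : 0 < eCount G A₀ B₀ := by exact_mod_cast hpos
  rw [eCount, card_pos] at hposn
  obtain ⟨p, hp⟩ := hposn
  simp only [mem_filter, mem_product] at hp
  obtain ⟨⟨hp1, hp2⟩, hadj⟩ := hp
  rw [hA₀, mem_sdiff, mem_filter, hF] at hp1
  rw [hB₀, mem_sdiff, mem_filter, hF] at hp2
  simp only [mem_insert, not_or, mem_univ, true_and] at hp1 hp2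
  refine ⟨p.1, p.2, hp1.1, hadj, hp2.1.symm, hp1.2.2.2, hp2.2.2.2,
    hp1.2.1, hp1.2.2.1, hp2.2.1, hp2.2.2.1, G.ne_of_adj hadj⟩
end
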